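/- In the dual of the Lie algebra 𝔤_{5,4}, consider the set of points ℓ with coordinates (a, b, c, μ, ν) relative to the basis {A*_ℓ, B*_ℓ, C*, U*, V*} with r = √(μ²+ν²) ≠ 0. Each coadjoint orbit through ℓ_{β,μ,ν} = βB*_ℓ + μU* + νV* equals {a A*_ℓ + (β + c²/(2r)) B*_ℓ + c C* + μU* + νV* : a, c ∈ ℝ}. Consequently the function Q(a A*_ℓ + b B*_ℓ + c C* + μU* + νV*) = 2br − c² is constant on each such orbit (with value 2βr). -/

import Mathlib

/-- `ℝ⁵` with coordinates `(a, b, c, u, v)` (or dual coordinates `(α, β, ρ, μ, ν)`). -/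
abbrev R5 : Type := ℝ × ℝ × ℝ × ℝ × ℝ

/-- The coadjoint action of `G_{5,4}`:
`Ad*(a,b,c,u,v)(α,β,ρ,μ,ν) =
  (α − bρ − cμ − μab/2 − νb²/2, β + ρa − νc + νab/2 + μa²/2, ρ + μa + νb, μ, ν)`. -/
noncomputable def ad54 (g ℓ : R5) : R5 :=
  (ℓ.1 - g.2.1 * ℓ.2.2.1 - g.2.2.1 * ℓ.2.2.2.1 - ℓ.2.2.2.1 * g.1 * g.2.1 / 2
      - ℓ.2.2.2.2 * g.2.1 ^ 2 / 2,
   ℓ.2.1 + ℓ.2.2.1 * g.1 - ℓ.2.2.2.2 * g.2.2.1 + ℓ.2.2.2.2 * g.1 * g.2.1 / 2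
      + ℓ.2.2.2.1 * g.1 ^ 2 / 2,
   ℓ.2.2.1 + ℓ.2.2.2.1 * g.1 + ℓ.2.2.2.2 * g.2.1,
   ℓ.2.2.2.1, ℓ.2.2.2.2)

/-- The `G_{5,4}`-invariant `Q(aA*_ℓ + bB*_ℓ + cC* + μU* + νV*) = 2br − c²`,
expressed in the standard dual coordinates `(α,β,ρ,μ,ν)`: since
`br = ℓ(B_ℓ)·r = −να + μβ`, one has `Q(α,β,ρ,μ,ν) = 2(μβ − να) − ρ²`. -/
noncomputable def Q54 (m : R5) : ℝ :=
  2 * (m.2.2.2.1 * m.2.1 - m.2.2.2.2 * m.1) - m.2.2.1 ^ 2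

/-!
`Q` is a polynomial Casimir: a direct computation gives `Q (Ad* g ℓ) = Q ℓ` for every `g` and `ℓ`,
and `Q (ℓ_{β,μ,ν}) = 2βr`. Conversely, a point with the same `μ, ν` on which `Q` takes the value
`2βr` has, in the rotated frame `(A_ℓ, B_ℓ)`, second coordinate `β + c²/(2r)`, and every such point
is reached by an explicit group element. Hence orbit ⊆ level set ⊆ parametrised set ⊆ orbit.
-/

lemma Q54_ad54 (g ℓ : R5) : Q54 (ad54 g ℓ) = Q54 ℓ := by
  simp only [ad54, Q54]
  ring

section PolarCoordinates

variable {β r μt νt μ ν : ℝ}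

lemma Q54_basePoint (hμ : μ = r * μt) (hν : ν = r * νt) (hunit : μt ^ 2 + νt ^ 2 = 1) :
    Q54 (-νt * β, μt * β, 0, μ, ν) = 2 * β * r := by
  simp only [Q54]
  linear_combination (2 * β * r) * hunit + (2 * μt * β) * hμ + (2 * νt * β) * hν

lemma exists_adapted_of_Q54_eq (hr : r ≠ 0) (hμ : μ = r * μt) (hν : ν = r * νt)
    (hunit : μt ^ 2 + νt ^ 2 = 1) {m : R5} (hm : m.2.2.2 = (μ, ν)) (hQ : Q54 m = 2 * β * r) :
    ∃ a c : ℝ, m = (μt * a - νt * (β + c ^ 2 / (2 * r)),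
      νt * a + μt * (β + c ^ 2 / (2 * r)), c, μ, ν) := by
  obtain ⟨α, β', ρ, m₄⟩ := m
  obtain rfl : m₄ = (μ, ν) := hm
  -- `Q` says that the `B_ℓ`-coordinate `μt β' - νt α` equals `β + ρ²/(2r)`
  have hB : β + ρ ^ 2 / (2 * r) = μt * β' - νt * α := by
    simp only [Q54] at hQ
    field_simp
    linear_combination -hQ + (2 * β') * hμ - (2 * α) * hν
  refine ⟨μt * α + νt * β', ρ, ?_⟩
  rw [hB, Prod.mk.injEq, Prod.mk.injEq]
  refine ⟨?_, ?_, rfl⟩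
  · linear_combination (-α) * hunit
  · linear_combination (-β') * hunit

lemma ad54_adapted (hr : r ≠ 0) (hμ : μ = r * μt) (hν : ν = r * νt)
    (hunit : μt ^ 2 + νt ^ 2 = 1) (a c : ℝ) :
    ad54 (μt * c / r, νt * c / r, -a / r, 0, 0) (-νt * β, μt * β, 0, μ, ν) =
      (μt * a - νt * (β + c ^ 2 / (2 * r)), νt * a + μt * (β + c ^ 2 / (2 * r)), c, μ, ν) := by
  subst hμ hν
  simp only [ad54, Prod.mk.injEq]
  refine ⟨?_, ?_, ?_, trivial⟩ <;> field_simp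
  · linear_combination (-(νt * c ^ 2)) * hunit
  · linear_combination (μt * c ^ 2) * hunit
  · linear_combination c * hunit

end PolarCoordinates

lemma sq_div_sqrt_add_sq_div_sqrt {μ ν : ℝ} (h : μ ^ 2 + ν ^ 2 ≠ 0) :
    (μ / √(μ ^ 2 + ν ^ 2)) ^ 2 + (ν / √(μ ^ 2 + ν ^ 2)) ^ 2 = 1 := by
  rw [div_pow, div_pow, ← add_div, Real.sq_sqrt (by positivity), div_self h]

/-- For `r = √(μ²+ν²) ≠ 0`, the coadjoint orbit of
`ℓ_{β,μ,ν} = βB*_ℓ + μU* + νV*` equals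
`{a A*_ℓ + (β + c²/(2r)) B*_ℓ + c C* + μU* + νV* : a, c ∈ ℝ}`, and consequently
`Q` is constant on this orbit, with value `2βr`. -/
theorem stmt10 (β μ ν : ℝ) (h : μ ^ 2 + ν ^ 2 ≠ 0) :
    ∀ r μt νt : ℝ, r = Real.sqrt (μ ^ 2 + ν ^ 2) → μt = μ / r → νt = ν / r →
      ({m : R5 | ∃ g : R5, ad54 g (-νt * β, μt * β, 0, μ, ν) = m}
          = {m : R5 | ∃ a c : ℝ,
              m = (μt * a - νt * (β + c ^ 2 / (2 * r)),
                   νt * a + μt * (β + c ^ 2 / (2 * r)), c, μ, ν)}) ∧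
      ∀ m : R5, (∃ g : R5, ad54 g (-νt * β, μt * β, 0, μ, ν) = m) →
        Q54 m = 2 * β * r := by
  intro r μt νt hr hμt hνt
  have hr0 : r ≠ 0 := hr ▸ by positivity
  have hμ : μ = r * μt := by rw [hμt, mul_div_cancel₀ μ hr0]
  have hν : ν = r * νt := by rw [hνt, mul_div_cancel₀ ν hr0]
  have hunit : μt ^ 2 + νt ^ 2 = 1 := by
    rw [hμt, hνt, hr]
    exact sq_div_sqrt_add_sq_div_sqrt h
  have hQ (g : R5) : Q54 (ad54 g (-νt * β, μt * β, 0, μ, ν)) = 2 * β * r := by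
    rw [Q54_ad54, Q54_basePoint hμ hν hunit]
  refine ⟨Set.Subset.antisymm ?_ ?_, ?_⟩
  · rintro _ ⟨g, rfl⟩
    exact exists_adapted_of_Q54_eq hr0 hμ hν hunit rfl (hQ g)
  · rintro _ ⟨a, c, rfl⟩
    exact ⟨_, ad54_adapted hr0 hμ hν hunit a c⟩
  · rintro _ ⟨g, rfl⟩
    exact hQ g
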